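/- Let T ∈ (0,∞) and let f : [0,T) → (0,∞) be continuous with lim_{t→T} f(t) = ∞. Then there exists a sequence {t_k} ⊆ [0,T) such that t_k → T and (∫₀^{t_k} f(τ) dτ) / f(t_k) → 0 as k → ∞. -/

import Mathlib

open MeasureTheory Filter Complex Topology ENNReal

noncomputable section

/-- Euclidean space ℝⁿ. -/
abbrev Euc (n : ℕ) : Type := EuclideanSpace ℝ (Fin n)

/-- L² norm of a function on ℝⁿ. -/
noncomputable def L2norm {n : ℕ} {F : Type*} [NormedAddCommGroup F] (f : Euc n → F) : ℝ :=
  (∫ x : Euc n, ‖f x‖ ^ 2) ^ ((1:ℝ)/2)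

/-- L^p norm (p real) of a function on ℝⁿ. -/
noncomputable def LpNorm' {n : ℕ} {F : Type*} [NormedAddCommGroup F] (p : ℝ) (f : Euc n → F) : ℝ :=
  (∫ x : Euc n, ‖f x‖ ^ p) ^ (1/p)

/-- Laplacian, as the sum of second directional derivatives along coordinate axes. -/
noncomputable def lap {n : ℕ} {F : Type*} [NormedAddCommGroup F] [NormedSpace ℝ F]
    (f : Euc n → F) (x : Euc n) : F :=
  ∑ i : Fin n, fderiv ℝ (fun y => fderiv ℝ f y (EuclideanSpace.single i 1)) x
    (EuclideanSpace.single i 1)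

/-- Squared pointwise norm of the gradient. -/
noncomputable def gradSq {n : ℕ} (f : Euc n → ℂ) (x : Euc n) : ℝ :=
  ∑ i : Fin n, ‖fderiv ℝ f x (EuclideanSpace.single i 1)‖ ^ 2

/-- L² norm of the gradient ‖∇f‖_{L²}. -/
noncomputable def gradL2 {n : ℕ} (f : Euc n → ℂ) : ℝ :=
  (∫ x : Euc n, gradSq f x) ^ ((1:ℝ)/2)

/-- Membership in H¹(ℝⁿ): f and ∇f lie in L². -/
def InH1 {n : ℕ} (f : Euc n → ℂ) : Prop :=
  MemLp f 2 volume ∧ MemLp (fun x => fderiv ℝ f x) 2 volume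

/-- Membership in the weighted space ℋ¹ = {φ ∈ H¹ : xφ ∈ L²}. -/
def InH1w {n : ℕ} (f : Euc n → ℂ) : Prop :=
  InH1 f ∧ MemLp (fun x : Euc n => ‖x‖ * ‖f x‖) 2 volume

/-- `Q` is a positive radial H¹ solution of ΔQ + |Q|^{4/n} Q = Q (ground state). -/
def IsGroundState {n : ℕ} (Q : Euc n → ℝ) : Prop :=
  (∀ x, 0 < Q x) ∧ (∀ x y : Euc n, ‖x‖ = ‖y‖ → Q x = Q y) ∧
  MemLp Q 2 volume ∧ MemLp (fun x => fderiv ℝ Q x) 2 volume ∧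
  ∀ x, lap Q x + |Q x| ^ ((4:ℝ)/(n:ℝ)) * Q x = Q x

/-- Solution on [0,T), with values in ℋ¹, of the damped NLS with Stark potential
`i uₜ = -Δu + (E⋅x) u - |u|^{p-1} u - i a u` (understood pointwise in (t,x)). -/
def IsSolStark {n : ℕ} (a : ℝ) (Ev : Euc n) (p : ℝ) (T : ℝ≥0∞) (u : ℝ → Euc n → ℂ) : Prop :=
  ∀ t : ℝ, 0 ≤ t → ENNReal.ofReal t < T →
    InH1w (u t) ∧
    (∀ x, DifferentiableAt ℝ (fun s => u s x) t) ∧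
    Differentiable ℝ (u t) ∧ Differentiable ℝ (fun y => fderiv ℝ (u t) y) ∧
    ∀ x, Complex.I * deriv (fun s => u s x) t =
      - lap (u t) x + (((inner ℝ Ev x : ℝ)) : ℂ) * u t x
        - ((‖u t x‖ ^ (p - 1) : ℝ) : ℂ) * u t x - Complex.I * (a : ℂ) * u t x

/-- Solution on [0,T), with values in H¹, of the damped NLS
`i φₜ = -Δφ - |φ|^{p-1} φ - i a φ`. -/
def IsSolDamped {n : ℕ} (a : ℝ) (p : ℝ) (T : ℝ≥0∞) (u : ℝ → Euc n → ℂ) : Prop :=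
  ∀ t : ℝ, 0 ≤ t → ENNReal.ofReal t < T →
    InH1 (u t) ∧
    (∀ x, DifferentiableAt ℝ (fun s => u s x) t) ∧
    Differentiable ℝ (u t) ∧ Differentiable ℝ (fun y => fderiv ℝ (u t) y) ∧
    ∀ x, Complex.I * deriv (fun s => u s x) t =
      - lap (u t) x - ((‖u t x‖ ^ (p - 1) : ℝ) : ℂ) * u t x - Complex.I * (a : ℂ) * u t x

/-- Solution on [0,T), with values in Σ = ℋ¹ = H¹ ∩ {xφ ∈ L²}, of the damped NLS. -/
def IsSolDampedW {n : ℕ} (a : ℝ) (p : ℝ) (T : ℝ≥0∞) (u : ℝ → Euc n → ℂ) : Prop :=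
  ∀ t : ℝ, 0 ≤ t → ENNReal.ofReal t < T →
    InH1w (u t) ∧
    (∀ x, DifferentiableAt ℝ (fun s => u s x) t) ∧
    Differentiable ℝ (u t) ∧ Differentiable ℝ (fun y => fderiv ℝ (u t) y) ∧
    ∀ x, Complex.I * deriv (fun s => u s x) t =
      - lap (u t) x - ((‖u t x‖ ^ (p - 1) : ℝ) : ℂ) * u t x - Complex.I * (a : ℂ) * u t x

/-- Maximal solution of the damped NLS with Stark potential: a solution on [0,T)
that does not extend to a solution on any larger interval. -/
def IsMaxSolStark {n : ℕ} (a : ℝ) (Ev : Euc n) (p : ℝ) (T : ℝ≥0∞) (u : ℝ → Euc n → ℂ) : Prop :=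
  IsSolStark a Ev p T u ∧
  ∀ (T' : ℝ≥0∞) (u' : ℝ → Euc n → ℂ), T ≤ T' → IsSolStark a Ev p T' u' →
    (∀ t : ℝ, 0 ≤ t → ENNReal.ofReal t < T → u' t = u t) → T' = T

/-- Maximal solution of the damped NLS with values in Σ. -/
def IsMaxSolDampedW {n : ℕ} (a : ℝ) (p : ℝ) (T : ℝ≥0∞) (u : ℝ → Euc n → ℂ) : Prop :=
  IsSolDampedW a p T u ∧
  ∀ (T' : ℝ≥0∞) (u' : ℝ → Euc n → ℂ), T ≤ T' → IsSolDampedW a p T' u' →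
    (∀ t : ℝ, 0 ≤ t → ENNReal.ofReal t < T → u' t = u t) → T' = T

/-- Free energy E₀(f) = ‖∇f‖₂² - (2/(p+1)) ‖f‖_{p+1}^{p+1}. -/
noncomputable def freeEnergy {n : ℕ} (p : ℝ) (f : Euc n → ℂ) : ℝ :=
  (∫ x : Euc n, gradSq f x) - (2 / (p + 1)) * ∫ x : Euc n, ‖f x‖ ^ (p + 1)

/-- Stark energy E_V(f) = ∫ (|∇f|² + (E⋅x)|f|² - (2/(p+1)) |f|^{p+1}). -/
noncomputable def starkEnergy {n : ℕ} (p : ℝ) (Ev : Euc n) (f : Euc n → ℂ) : ℝ :=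
  ∫ x : Euc n, (gradSq f x + (inner ℝ Ev x : ℝ) * ‖f x‖ ^ 2
    - (2 / (p + 1)) * ‖f x‖ ^ (p + 1))

/-- The quantity ∫ E ⋅ (f ∇f̄) dx. -/
noncomputable def starkFlux {n : ℕ} (Ev : Euc n) (f : Euc n → ℂ) : ℂ :=
  ∫ x : Euc n, ∑ i : Fin n, ((Ev i : ℝ) : ℂ) * f x *
    fderiv ℝ (fun y => (starRingEnd ℂ) (f y)) x (EuclideanSpace.single i 1)

/-- i-th component of the momentum P(f) = Im ∫ f̄ ∇f dx. -/
noncomputable def momentum {n : ℕ} (f : Euc n → ℂ) (i : Fin n) : ℝ :=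
  (∫ x : Euc n, (starRingEnd ℂ) (f x) * fderiv ℝ f x (EuclideanSpace.single i 1)).im

/-- The log-log blow-up rate (log|log(T*-t)| / (T*-t))^{1/2}. -/
noncomputable def loglogRate (Tstar t : ℝ) : ℝ :=
  (Real.log |Real.log (Tstar - t)| / (Tstar - t)) ^ ((1:ℝ)/2)

/-- Pointwise (classical) solution of the damped NLS (no integrability required). -/
def PtSolDamped {n : ℕ} (a : ℝ) (p : ℝ) (T : ℝ≥0∞) (u : ℝ → Euc n → ℂ) : Prop :=
  ∀ t : ℝ, 0 ≤ t → ENNReal.ofReal t < T →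
    (∀ x, DifferentiableAt ℝ (fun s => u s x) t) ∧
    Differentiable ℝ (u t) ∧ Differentiable ℝ (fun y => fderiv ℝ (u t) y) ∧
    ∀ x, Complex.I * deriv (fun s => u s x) t =
      - lap (u t) x - ((‖u t x‖ ^ (p - 1) : ℝ) : ℂ) * u t x - Complex.I * (a : ℂ) * u t x

/-- Pointwise (classical) solution of the damped NLS with Stark potential. -/
def PtSolStark {n : ℕ} (a : ℝ) (Ev : Euc n) (p : ℝ) (T : ℝ≥0∞) (u : ℝ → Euc n → ℂ) : Prop :=
  ∀ t : ℝ, 0 ≤ t → ENNReal.ofReal t < T →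
    (∀ x, DifferentiableAt ℝ (fun s => u s x) t) ∧
    Differentiable ℝ (u t) ∧ Differentiable ℝ (fun y => fderiv ℝ (u t) y) ∧
    ∀ x, Complex.I * deriv (fun s => u s x) t =
      - lap (u t) x + (((inner ℝ Ev x : ℝ)) : ℂ) * u t x
        - ((‖u t x‖ ^ (p - 1) : ℝ) : ℂ) * u t x - Complex.I * (a : ℂ) * u t x

/-- The Avron–Herbst transform u(t,x) = φ(t, x + t²E) e^{-i(tE⋅x + |E|²t³/3)}. -/
noncomputable def ahTransform {n : ℕ} (Ev : Euc n) (φ : ℝ → Euc n → ℂ) : ℝ → Euc n → ℂ :=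
  fun t x => φ t (x + t ^ 2 • Ev) *
    Complex.exp (-Complex.I * ((t * (inner ℝ Ev x : ℝ) + ‖Ev‖ ^ 2 * t ^ 3 / 3 : ℝ) : ℂ))

/-- The inverse Avron–Herbst transform φ(t,x) = u(t, x - t²E) e^{i(tE⋅x - 2|E|²t³/3)}. -/
noncomputable def ahInverse {n : ℕ} (Ev : Euc n) (u : ℝ → Euc n → ℂ) : ℝ → Euc n → ℂ :=
  fun t x => u t (x - t ^ 2 • Ev) *
    Complex.exp (Complex.I * ((t * (inner ℝ Ev x : ℝ) - 2 * ‖Ev‖ ^ 2 * t ^ 3 / 3 : ℝ) : ℂ))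

/-- H¹ inner product pairing ⟨f, g⟩_{H¹} = ∫ (ḡ f + ∇ḡ ⋅ ∇f). -/
noncomputable def H1inner {n : ℕ} (f g : Euc n → ℂ) : ℂ :=
  ∫ x : Euc n, ((starRingEnd ℂ) (g x) * f x +
    ∑ i : Fin n, (starRingEnd ℂ) (fderiv ℝ g x (EuclideanSpace.single i 1)) *
      fderiv ℝ f x (EuclideanSpace.single i 1))

/-! With `I t = ∫₀ᵗ f`, suppose `I ≥ ε f` on some `[a, T)`. Then `I' = f ≤ I / ε` there, so by
Gronwall `I` stays bounded on `[a, T)`, and then so does `f ≤ I / ε`, contradicting `f → ∞`.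
Hence `I / f < ε` arbitrarily close to `T` for every `ε > 0`, i.e. `0` is a cluster point of
`I / f` at `T⁻`, and a sequence realizing it gives the claim. -/

open Set

theorem norm_le_mul_exp_of_norm_deriv_le {E : Type*} [NormedAddCommGroup E] [NormedSpace ℝ E]
    {g g' : ℝ → E} {a b K : ℝ} (hK : 0 ≤ K) (hg : ∀ t ∈ Ico a b, HasDerivAt g (g' t) t)
    (bound : ∀ t ∈ Ico a b, ‖g' t‖ ≤ K * ‖g t‖) :
    ∀ t ∈ Ico a b, ‖g t‖ ≤ ‖g a‖ * Real.exp (K * (b - a)) := by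
  intro t ht
  have hsub : Icc a t ⊆ Ico a b := Icc_subset_Ico_right ht.2
  have gronwall := norm_le_gronwallBound_of_norm_deriv_right_le (δ := ‖g a‖) (ε := 0)
    (fun x hx => (hg x (hsub hx)).continuousAt.continuousWithinAt)
    (fun x hx => (hg x (hsub (Ico_subset_Icc_self hx))).hasDerivWithinAt) le_rfl
    (fun x hx => by simpa using bound x (hsub (Ico_subset_Icc_self hx))) t ⟨ht.1, le_rfl⟩
  rw [gronwallBound_ε0] at gronwall
  refine gronwall.trans (mul_le_mul_of_nonneg_left ?_ (norm_nonneg _))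
  gcongr
  exact ht.2.le

theorem frequently_lt_mul_of_hasDerivAt_of_tendsto_atTop {g f : ℝ → ℝ} {T ε : ℝ} (hε : 0 < ε)
    (hg : ∀ᶠ t in 𝓝[<] T, HasDerivAt g (f t) t) (hf : Tendsto f (𝓝[<] T) atTop) :
    ∃ᶠ t in 𝓝[<] T, g t < ε * f t := by
  by_contra hfreq
  simp only [not_frequently, not_lt] at hfreq
  obtain ⟨a, haT, ha⟩ := mem_nhdsLT_iff_exists_Ico_subset.1
    (hg.and (hfreq.and (hf.eventually_gt_atTop 0)))
  have hbound : ∀ t ∈ Ico a T, ‖f t‖ ≤ ε⁻¹ * ‖g t‖ := fun t ht => by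
    obtain ⟨-, hle, hpos⟩ := ha ht
    rw [Real.norm_of_nonneg hpos.le, Real.norm_of_nonneg ((mul_pos hε hpos).le.trans hle)]
    rwa [inv_mul_eq_div, le_div_iff₀' hε]
  have hgb := norm_le_mul_exp_of_norm_deriv_le (inv_nonneg.2 hε.le) (fun t ht => (ha ht).1) hbound
  set M := ‖g a‖ * Real.exp (ε⁻¹ * (T - a))
  have hnear : ∀ᶠ t in 𝓝[<] T, t ∈ Ico a T := eventually_mem_set.2 (Ico_mem_nhdsLT haT)
  obtain ⟨t, ht, hlarge⟩ := (hnear.and (hf.eventually_gt_atTop (ε⁻¹ * M))).exists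
  have := (hbound t ht).trans (mul_le_mul_of_nonneg_left (hgb t ht) (by positivity))
  linarith [Real.le_norm_self (f t)]

theorem mapClusterPt_zero_div_of_hasDerivAt_of_tendsto_atTop {g f : ℝ → ℝ} {T : ℝ}
    (hg : ∀ᶠ t in 𝓝[<] T, HasDerivAt g (f t) t) (hg₀ : ∀ᶠ t in 𝓝[<] T, 0 ≤ g t)
    (hf : Tendsto f (𝓝[<] T) atTop) :
    MapClusterPt 0 (𝓝[<] T) (fun t => g t / f t) := by
  rw [Metric.nhds_basis_ball.mapClusterPt_iff_frequently]
  intro ε hε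
  refine (frequently_lt_mul_of_hasDerivAt_of_tendsto_atTop hε hg hf).mp ?_
  filter_upwards [hg₀, hf.eventually_gt_atTop 0] with t hgt hft hlt
  rw [Metric.mem_ball, Real.dist_0_eq_abs, abs_of_nonneg (div_nonneg hgt hft.le),
    div_lt_iff₀ hft]
  linarith

theorem hasDerivAt_integral_of_continuousOn_Ico {f : ℝ → ℝ} {a b : ℝ}
    (hf : ContinuousOn f (Ico a b)) :
    ∀ t ∈ Ioo a b, HasDerivAt (fun t => ∫ τ in a..t, f τ) (f t) t := by
  intro t ht
  have hfo : ContinuousOn f (Ioo a b) := hf.mono Ioo_subset_Ico_self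
  refine intervalIntegral.integral_hasDerivAt_right ?_
    (hfo.stronglyMeasurableAtFilter isOpen_Ioo t ht)
    (hfo.continuousAt (isOpen_Ioo.mem_nhds ht))
  refine (hf.mono ?_).intervalIntegrable
  rw [uIcc_of_le ht.1.le]
  exact Icc_subset_Ico_right ht.2

theorem MapClusterPt.exists_seq_forall_mem_tendsto {ι α : Type*} [TopologicalSpace α]
    [FirstCountableTopology α] {l : Filter ι} [IsCountablyGenerated l] {x : α} {u : ι → α}
    (hx : MapClusterPt x l u) {s : Set ι} (hs : s ∈ l) :
    ∃ ψ : ℕ → ι, (∀ k, ψ k ∈ s) ∧ Tendsto ψ atTop l ∧ Tendsto (u ∘ ψ) atTop (𝓝 x) := by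
  obtain ⟨ψ, hux, hψ⟩ := hx.exists_seq_tendsto
  obtain ⟨N, hN⟩ := eventually_atTop.1 (hψ hs)
  exact ⟨fun k => ψ (k + N), fun k => hN _ (Nat.le_add_left N k),
    (tendsto_add_atTop_iff_nat N).2 hψ, (tendsto_add_atTop_iff_nat N).2 hux⟩

/-- If f : [0,T) → (0,∞) is continuous with f(t) → ∞ as t → T < ∞, then
there is a sequence t_k → T in [0,T) with (∫₀^{t_k} f)/f(t_k) → 0. -/
theorem stmt14_integral_ratio_seq
    (T : ℝ) (hT : 0 < T) (f : ℝ → ℝ)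
    (hf : ContinuousOn f (Set.Ico 0 T)) (hpos : ∀ t ∈ Set.Ico (0:ℝ) T, 0 < f t)
    (hlim : Tendsto f (𝓝[<] T) atTop) :
    ∃ t : ℕ → ℝ, (∀ k, t k ∈ Set.Ico (0:ℝ) T) ∧ Tendsto t atTop (𝓝 T) ∧
      Tendsto (fun k => (∫ τ in (0:ℝ)..(t k), f τ) / f (t k)) atTop (𝓝 0) := by
  have hderiv : ∀ᶠ t in 𝓝[<] T, HasDerivAt (fun t => ∫ τ in (0:ℝ)..t, f τ) (f t) t :=
    eventually_of_mem (Ioo_mem_nhdsLT hT) (hasDerivAt_integral_of_continuousOn_Ico hf)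
  have hnonneg : ∀ᶠ t in 𝓝[<] T, 0 ≤ ∫ τ in (0:ℝ)..t, f τ :=
    eventually_of_mem (Ico_mem_nhdsLT hT) fun t ht =>
      intervalIntegral.integral_nonneg ht.1 fun τ hτ => (hpos τ ⟨hτ.1, hτ.2.trans_lt ht.2⟩).le
  obtain ⟨t, ht, htT, hratio⟩ :=
    (mapClusterPt_zero_div_of_hasDerivAt_of_tendsto_atTop hderiv hnonneg hlim)
      |>.exists_seq_forall_mem_tendsto (Ico_mem_nhdsLT hT)
  exact ⟨t, ht, htT.mono_right nhdsWithin_le_nhds, hratio⟩
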